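/- arXiv:2012.14717 — 5 statements merged into one kernel-verified Lean document; each statement's English description precedes it below -/
import Mathlib

section
/- If a pattern P without empty rows or columns has an m₀×n₀ witness, then P has an m₀×n₀ explicit witness (a matrix saturated for P that has an expandable row and an expandable column). -/
/-- A 0-1 matrix `M` contains a pattern `P` if there are strictly increasing row and
column index maps embedding the 1-entries of `P` into 1-entries of `M`. -/
def Contains {m n k l : ℕ} (M : Fin m → Fin n → Bool) (P : Fin k → Fin l → Bool) : Prop :=
  ∃ r : Fin k → Fin m, ∃ c : Fin l → Fin n, StrictMono r ∧ StrictMono c ∧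
    ∀ i j, P i j = true → M (r i) (c j) = true

def Avoids {m n k l : ℕ} (M : Fin m → Fin n → Bool) (P : Fin k → Fin l → Bool) : Prop :=
  ¬ Contains M P

/-- The matrix obtained from `M` by changing the entry at `(i, j)` to 1. -/
def SetOne {m n : ℕ} (M : Fin m → Fin n → Bool) (i : Fin m) (j : Fin n) :
    Fin m → Fin n → Bool :=
  fun i' j' => if i' = i ∧ j' = j then true else M i' j'

def ExpandableRow {m n k l : ℕ} (M : Fin m → Fin n → Bool) (P : Fin k → Fin l → Bool)
    (i : Fin m) : Prop :=
  (∀ j, M i j = false) ∧ ∀ j, Contains (SetOne M i j) P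

def ExpandableCol {m n k l : ℕ} (M : Fin m → Fin n → Bool) (P : Fin k → Fin l → Bool)
    (j : Fin n) : Prop :=
  (∀ i, M i j = false) ∧ ∀ i, Contains (SetOne M i j) P

def Saturated {m n k l : ℕ} (M : Fin m → Fin n → Bool) (P : Fin k → Fin l → Bool) : Prop :=
  Avoids M P ∧ ∀ i j, M i j = false → Contains (SetOne M i j) P

def IsWitness {m n k l : ℕ} (M : Fin m → Fin n → Bool) (P : Fin k → Fin l → Bool) : Prop :=
  Avoids M P ∧ (∃ i, ExpandableRow M P i) ∧ (∃ j, ExpandableCol M P j)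

def HorizontalWitness {m n k l : ℕ} (M : Fin m → Fin n → Bool)
    (P : Fin k → Fin l → Bool) : Prop :=
  Avoids M P ∧ ∃ j, ExpandableCol M P j

def VerticalWitness {m n k l : ℕ} (M : Fin m → Fin n → Bool)
    (P : Fin k → Fin l → Bool) : Prop :=
  Avoids M P ∧ ∃ i, ExpandableRow M P i

/-- `P` is once-separable: block form `((A,0),(0,B))` or `((0,A),(B,0))` with `A`, `B` nonzero. -/
def OnceSeparable {k l : ℕ} (P : Fin k → Fin l → Bool) : Prop :=
  ∃ a b : ℕ, a ≤ k ∧ b ≤ l ∧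
    (((∀ i j, P i j = true → ((i.val < a ∧ j.val < b) ∨ (a ≤ i.val ∧ b ≤ j.val))) ∧
      (∃ i j, i.val < a ∧ j.val < b ∧ P i j = true) ∧
      (∃ i j, a ≤ i.val ∧ b ≤ j.val ∧ P i j = true)) ∨
     ((∀ i j, P i j = true → ((i.val < a ∧ b ≤ j.val) ∨ (a ≤ i.val ∧ j.val < b))) ∧
      (∃ i j, i.val < a ∧ b ≤ j.val ∧ P i j = true) ∧
      (∃ i j, a ≤ i.val ∧ j.val < b ∧ P i j = true)))

def NoEmptyRowCol {k l : ℕ} (P : Fin k → Fin l → Bool) : Prop :=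
  (∀ i, ∃ j, P i j = true) ∧ (∀ j, ∃ i, P i j = true)

def IsPermMatrix {k : ℕ} (P : Fin k → Fin k → Bool) : Prop :=
  (∀ i, ∃! j, P i j = true) ∧ (∀ j, ∃! i, P i j = true)

/-- `P` is non-trivial: it has a row whose only 1-entry is leftmost, a row whose only
1-entry is rightmost, a column whose only 1-entry is topmost, and a column whose only
1-entry is bottommost. -/
def NonTrivial {k l : ℕ} (P : Fin k → Fin l → Bool) : Prop :=
  (∃ i, ∀ j, (P i j = true ↔ j.val = 0)) ∧
  (∃ i, ∀ j, (P i j = true ↔ j.val = l - 1)) ∧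
  (∃ j, ∀ i, (P i j = true ↔ i.val = 0)) ∧
  (∃ j, ∀ i, (P i j = true ↔ i.val = k - 1))

/-- The two-copy witness construction `W(P)` (0-based indices; `s < t` are the 0-based
rows of the leftmost and rightmost 1-entries of `P`). -/
def WP {k : ℕ} (P : Fin k → Fin k → Bool) (s t : ℕ) :
    Fin (k + (t - s)) → Fin (2 * k - 2) → Bool :=
  fun i j =>
    if h : j.val < k - 1 ∧ i.val < k then P ⟨i.val, h.2⟩ ⟨j.val, by omega⟩
    else if h2 : k - 1 ≤ j.val ∧ t - s ≤ i.val ∧ i.val - (t - s) < k ∧ j.val - (k - 2) < k then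
      P ⟨i.val - (t - s), h2.2.2.1⟩ ⟨j.val - (k - 2), h2.2.2.2⟩
    else false

/-!
Among the extensions of a witness `M` that avoid `P` and stay zero on its expandable row `i₀`
and column `j₀`, take a maximal one `M'`. Expandability passes to `M'` because containing `P`
is monotone, so adding a 1 on row `i₀` or column `j₀` creates `P`; elsewhere, adding a 1
creates `P` by maximality.
-/

section

variable {m n k l : ℕ} {M N : Fin m → Fin n → Bool} {P : Fin k → Fin l → Bool}

lemma Contains.mono (hMN : M ≤ N) (h : Contains M P) : Contains N P := by
  obtain ⟨r, c, hr, hc, hent⟩ := h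
  exact ⟨r, c, hr, hc, fun i j hp => Bool.le_iff_imp.mp (hMN (r i) (c j)) (hent i j hp)⟩

lemma setOne_self (M : Fin m → Fin n → Bool) (i : Fin m) (j : Fin n) : SetOne M i j i j = true :=
  if_pos ⟨rfl, rfl⟩

lemma setOne_of_ne {i i' : Fin m} {j j' : Fin n} (h : ¬(i' = i ∧ j' = j)) :
    SetOne M i j i' j' = M i' j' :=
  if_neg h

lemma le_setOne (M : Fin m → Fin n → Bool) (i : Fin m) (j : Fin n) : M ≤ SetOne M i j := by
  intro i' j'
  by_cases h : i' = i ∧ j' = j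
  · simp [SetOne, h]
  · rw [setOne_of_ne h]

lemma setOne_mono (hMN : M ≤ N) (i : Fin m) (j : Fin n) : SetOne M i j ≤ SetOne N i j := by
  intro i' j'
  by_cases h : i' = i ∧ j' = j
  · simp [SetOne, h]
  · rw [setOne_of_ne h, setOne_of_ne h]
    exact hMN i' j'

lemma ExpandableRow.mono {i : Fin m} (h : ExpandableRow M P i) (hMN : M ≤ N)
    (hN : ∀ j, N i j = false) : ExpandableRow N P i :=
  ⟨hN, fun j => (h.2 j).mono (setOne_mono hMN i j)⟩

lemma ExpandableCol.mono {j : Fin n} (h : ExpandableCol M P j) (hMN : M ≤ N)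
    (hN : ∀ i, N i j = false) : ExpandableCol N P j :=
  ⟨hN, fun i => (h.2 i).mono (setOne_mono hMN i j)⟩

lemma exists_le_avoids_saturated_off (Z : Fin m → Fin n → Prop) (hM : Avoids M P)
    (hZ : ∀ i j, Z i j → M i j = false) :
    ∃ M', M ≤ M' ∧ Avoids M' P ∧ (∀ i j, Z i j → M' i j = false) ∧
      ∀ i j, ¬ Z i j → M' i j = false → Contains (SetOne M' i j) P := by
  obtain ⟨M', hle, hmax⟩ := Finite.exists_le_maximal
    (p := fun N => Avoids N P ∧ ∀ i j, Z i j → N i j = false) ⟨hM, hZ⟩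
  refine ⟨M', hle, hmax.prop.1, hmax.prop.2, fun i j hij h0 => ?_⟩
  by_contra hav
  have hZ' : ∀ i' j', Z i' j' → SetOne M' i j i' j' = false := fun i' j' hz => by
    rw [setOne_of_ne (by rintro ⟨rfl, rfl⟩; exact hij hz)]
    exact hmax.prop.2 i' j' hz
  have hge := hmax.2 ⟨hav, hZ'⟩ (le_setOne M' i j) i j
  rw [h0] at hge
  exact Bool.false_ne_true (Bool.le_iff_imp.mp hge (setOne_self M' i j))

end

theorem stmt4_general {k l m0 n0 : ℕ} (P : Fin k → Fin l → Bool)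
    (M : Fin m0 → Fin n0 → Bool) (hM : IsWitness M P) :
    ∃ M' : Fin m0 → Fin n0 → Bool, Saturated M' P ∧
      (∃ i, ExpandableRow M' P i) ∧ (∃ j, ExpandableCol M' P j) := by
  obtain ⟨hAv, ⟨i₀, hrow⟩, ⟨j₀, hcol⟩⟩ := hM
  obtain ⟨M', hle, hAv', hZ, hsat⟩ := exists_le_avoids_saturated_off
    (fun i j => i = i₀ ∨ j = j₀) hAv (by rintro i j (rfl | rfl); exacts [hrow.1 j, hcol.1 i])
  have hrow' := hrow.mono hle fun j => hZ i₀ j (Or.inl rfl)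
  have hcol' := hcol.mono hle fun i => hZ i j₀ (Or.inr rfl)
  refine ⟨M', ⟨hAv', fun i j h0 => ?_⟩, ⟨i₀, hrow'⟩, ⟨j₀, hcol'⟩⟩
  by_cases hi : i = i₀
  · exact hi ▸ hrow'.2 j
  by_cases hj : j = j₀
  · exact hj ▸ hcol'.2 i
  exact hsat i j (by tauto) h0

theorem stmt4 {k l m0 n0 : ℕ} (P : Fin k → Fin l → Bool) (hP : NoEmptyRowCol P)
    (M : Fin m0 → Fin n0 → Bool) (hM : IsWitness M P) :
    ∃ M' : Fin m0 → Fin n0 → Bool, Saturated M' P ∧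
      (∃ i, ExpandableRow M' P i) ∧ (∃ j, ExpandableCol M' P j) :=
  stmt4_general P M hM
end

section
/- Let P be a k×k pattern, not once-separable, with 1-entries exactly at four outer positions and possibly elsewhere, such that the block matrix W = ((0, W_H),(W_V, 0)) is built from a horizontal witness W_H and a vertical witness W_V for P. If an occurrence of P in W uses 1-entries from both the bottom-left block W_V and the top-right block W_H, then P is once-separable. (Equivalently: if P is not once-separable and avoids being contained in W_H and in W_V, then W avoids P.) -/
theorem stmt8 {k m0 m1 n0 n1 : ℕ} (P : Fin k → Fin k → Bool)
    (WH : Fin m0 → Fin n1 → Bool) (WV : Fin m1 → Fin n0 → Bool)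
    (hWH : Avoids WH P) (hWV : Avoids WV P)
    (r : Fin k → Fin (m0 + m1)) (c : Fin k → Fin (n0 + n1))
    (hr : StrictMono r) (hc : StrictMono c)
    (hemb : ∀ i j, P i j = true →
      (fun (i' : Fin (m0 + m1)) (j' : Fin (n0 + n1)) =>
        if hi : i'.val < m0 then
          if _hj : j'.val < n0 then false
          else WH ⟨i'.val, hi⟩ ⟨j'.val - n0, by have := j'.isLt; omega⟩
        else
          if hj : j'.val < n0 then WV ⟨i'.val - m0, by have := i'.isLt; omega⟩ ⟨j'.val, hj⟩
          else false) (r i) (c j) = true)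
    (hbl : ∃ i j, P i j = true ∧ m0 ≤ (r i).val ∧ (c j).val < n0)
    (htr : ∃ i j, P i j = true ∧ (r i).val < m0 ∧ n0 ≤ (c j).val) :
    OnceSeparable P := by
  classical
  obtain ⟨i1, j1, hP1, hri1, hcj1⟩ := hbl
  obtain ⟨i2, j2, hP2, hri2, hcj2⟩ := htr
  have hSne : (Finset.univ.filter (fun i : Fin k => m0 ≤ (r i).val)).Nonempty :=
    ⟨i1, by simp [hri1]⟩
  have hTne : (Finset.univ.filter (fun j : Fin k => n0 ≤ (c j).val)).Nonempty :=
    ⟨j2, by simp [hcj2]⟩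
  set A := (Finset.univ.filter (fun i : Fin k => m0 ≤ (r i).val)).min' hSne with hAdef
  set B := (Finset.univ.filter (fun j : Fin k => n0 ≤ (c j).val)).min' hTne with hBdef
  have hA : ∀ i : Fin k, (A.val ≤ i.val ↔ m0 ≤ (r i).val) := by
    intro i
    constructor
    · intro h
      have hmem := Finset.min'_mem _ hSne
      rw [Finset.mem_filter] at hmem
      exact le_trans hmem.2 (hr.monotone (show A ≤ i from h))
    · intro h
      exact Finset.min'_le _ i (by simp [h])
  have hB : ∀ j : Fin k, (B.val ≤ j.val ↔ n0 ≤ (c j).val) := by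
    intro j
    constructor
    · intro h
      have hmem := Finset.min'_mem _ hTne
      rw [Finset.mem_filter] at hmem
      exact le_trans hmem.2 (hc.monotone (show B ≤ j from h))
    · intro h
      exact Finset.min'_le _ j (by simp [h])
  refine ⟨A.val, B.val, le_of_lt A.isLt, le_of_lt B.isLt, Or.inr ⟨?_, ?_, ?_⟩⟩
  · intro i j hPij
    have hW := hemb i j hPij
    simp only at hW
    by_cases hi : (r i).val < m0
    · rw [dif_pos hi] at hW
      by_cases hj : (c j).val < n0
      · rw [dif_pos hj] at hW; exact absurd hW (by simp)
      · left
        refine ⟨?_, (hB j).mpr (by omega)⟩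
        have := (hA i).not.mpr (by omega)
        omega
    · rw [dif_neg hi] at hW
      by_cases hj : (c j).val < n0
      · right
        refine ⟨(hA i).mpr (by omega), ?_⟩
        have := (hB j).not.mpr (by omega)
        omega
      · rw [dif_neg hj] at hW; exact absurd hW (by simp)
  · refine ⟨i2, j2, ?_, (hB j2).mpr hcj2, hP2⟩
    have := (hA i2).not.mpr (by omega)
    omega
  · refine ⟨i1, j1, (hA i1).mpr hri1, ?_, hP1⟩
    have := (hB j1).not.mpr (by omega)
    omega
end

section
/- Let P be a non-trivial k×k pattern without empty rows or columns, with exactly one 1-entry in its first column (in row s) and exactly one 1-entry in its last column (in row t), with s < t. Define the (k+t−s)×(2k−2) matrix W(P) by: W(P)(i,j) = P(i,j) if j ≤ k−1 and i ≤ k; W(P)(i,j) = P(i−(t−s), j−(k−2)) if j ≥ k and i ≥ t−s+1; and W(P)(i,j) = 0 otherwise. If W(P) avoids P, then W(P) is a vertical witness for P: its t-th row is all-zero, and changing any single entry of the t-th row to 1 creates an occurrence of P. -/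
theorem stmt9 {k : ℕ} (hk : 2 ≤ k) (P : Fin k → Fin k → Bool) (s t : ℕ)
    (hst : s < t) (htk : t < k)
    (hnt : NonTrivial P) (hP : NoEmptyRowCol P)
    (hfirst : ∀ i : Fin k, (P i ⟨0, by omega⟩ = true ↔ i.val = s))
    (hlast : ∀ i : Fin k, (P i ⟨k - 1, by omega⟩ = true ↔ i.val = t))
    (havoid : Avoids (WP P s t) P) :
    (∀ j, WP P s t ⟨t, by omega⟩ j = false) ∧
    (∀ j, Contains (SetOne (WP P s t) ⟨t, by omega⟩ j) P) := by
  have hsk : s < k := lt_trans hst htk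
  -- row t of P has its only 1 in column k-1
  have hrowt : ∀ jj : Fin k, P ⟨t, htk⟩ jj = true ↔ jj.val = k - 1 := by
    obtain ⟨_, ⟨i, hi⟩, _, _⟩ := hnt
    have hiv : i.val = t := (hlast i).mp ((hi ⟨k - 1, by omega⟩).mpr (by simp))
    have hieq : i = ⟨t, htk⟩ := Fin.ext hiv
    rw [← hieq]; exact hi
  -- row s of P has its only 1 in column 0
  have hrows : ∀ jj : Fin k, P ⟨s, hsk⟩ jj = true ↔ jj.val = 0 := by
    obtain ⟨⟨i, hi⟩, _, _, _⟩ := hnt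
    have hiv : i.val = s := (hfirst i).mp ((hi ⟨0, by omega⟩).mpr (by simp))
    have hieq : i = ⟨s, hsk⟩ := Fin.ext hiv
    rw [← hieq]; exact hi
  constructor
  · intro j
    unfold WP
    split
    · next h =>
      rw [Bool.eq_false_iff]
      intro hc
      have := (hrowt ⟨j.val, by omega⟩).mp hc
      simp at this
      omega
    · split
      · next h h2 =>
        rw [Bool.eq_false_iff]
        intro hc
        have e1 : (⟨(⟨t, by omega⟩ : Fin (k + (t - s))).val - (t - s), h2.2.2.1⟩ : Fin k)
            = ⟨s, hsk⟩ := Fin.ext (by simp; omega)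
        rw [e1] at hc
        have := (hrows _).mp hc
        simp at this
        have := h2.1
        simp at this h ⊢
        omega
      · rfl
  · intro j
    by_cases hj : j.val < k - 1
    · -- use the second copy; column 0 of P maps to column j, row s of P maps to row t
      refine ⟨fun i => ⟨i.val + (t - s), by omega⟩,
        fun j' => if j'.val = 0 then j else ⟨j'.val + (k - 2), by omega⟩,
        ?_, ?_, ?_⟩
      · intro a b hab
        simp only [Fin.lt_def] at *
        omega
      · intro a b hab
        simp only [Fin.lt_def] at hab
        by_cases ha : a.val = 0 <;> by_cases hb : b.val = 0 <;>
          simp only [ha, hb, Fin.lt_def, if_pos, if_neg, if_true, if_false] <;>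
          simp_all <;> omega
      · intro i j' hij
        by_cases hj0 : j'.val = 0
        · have hj'eq : j' = ⟨0, by omega⟩ := Fin.ext hj0
          have hi : i.val = s := (hfirst i).mp (hj'eq ▸ hij)
          simp only [hj0, if_pos]
          rw [SetOne, if_pos ⟨Fin.ext (by simp; omega), rfl⟩]
        · have hw : WP P s t ⟨i.val + (t - s), by omega⟩ ⟨j'.val + (k - 2), by omega⟩
              = true := by
            unfold WP
            rw [dif_neg (by simp; omega), dif_pos (by simp; omega)]
            convert hij using 2 <;> exact Fin.ext (by simp; try omega)
          simp only [hj0, if_neg, if_false]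
          simp [SetOne, hw]
    · -- use the first copy; column k-1 of P maps to column j, row t of P maps to row t
      refine ⟨fun i => ⟨i.val, by omega⟩,
        fun j' => if j'.val = k - 1 then j else ⟨j'.val, by omega⟩,
        ?_, ?_, ?_⟩
      · intro a b hab
        simp only [Fin.lt_def] at *
        exact hab
      · intro a b hab
        simp only [Fin.lt_def] at hab
        have hbk : b.val ≤ k - 1 := by omega
        by_cases ha : a.val = k - 1 <;> by_cases hb : b.val = k - 1 <;>
          simp only [ha, hb, Fin.lt_def, if_pos, if_neg, if_true, if_false] <;>
          simp_all <;> omega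
      · intro i j' hij
        by_cases hjl : j'.val = k - 1
        · have hj'eq : j' = ⟨k - 1, by omega⟩ := Fin.ext hjl
          have hi : i.val = t := (hlast i).mp (hj'eq ▸ hij)
          simp only [hjl, if_pos]
          rw [SetOne, if_pos ⟨Fin.ext (by simp; omega), rfl⟩]
        · have hj'lt : j'.val < k - 1 := by omega
          have hw : WP P s t ⟨i.val, by omega⟩ ⟨j'.val, by omega⟩ = true := by
            unfold WP
            rw [dif_pos (by simp; omega)]
            convert hij using 2 <;> exact Fin.ext (by simp)
          simp only [hjl, if_neg, if_false]
          simp [SetOne, hw]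
end

section
/- Let P be a non-trivial Q0-like k×k pattern. Then every occurrence of the 2×2 pattern ((0,1),(1,0)) in W(P) has height at most k−1, where the height of an occurrence at positions (i_B, j_B), (i_T, j_T) with i_T < i_B and j_B < j_T is i_B − i_T + 1. -/
theorem stmt11 {k : ℕ} (P : Fin k → Fin k → Bool) (a b s t : ℕ)
    (hs : 0 < s) (hst : s < t) (htk : t < k - 1)
    (ha : 0 < a) (hab : a < b) (hbk : b < k - 1)
    (hnt : NonTrivial P) (hP : NoEmptyRowCol P)
    (hrow0 : ∀ j : Fin k, (P ⟨0, by omega⟩ j = true ↔ j.val = a))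
    (hrowlast : ∀ j : Fin k, (P ⟨k - 1, by omega⟩ j = true ↔ j.val = b))
    (hcol0 : ∀ i : Fin k, (P i ⟨0, by omega⟩ = true ↔ i.val = s))
    (hcollast : ∀ i : Fin k, (P i ⟨k - 1, by omega⟩ = true ↔ i.val = t)) :
    ∀ (iB iT : Fin (k + (t - s))) (jB jT : Fin (2 * k - 2)),
      WP P s t iT jT = true → WP P s t iB jB = true →
      iT < iB → jB < jT → iB.val - iT.val + 1 ≤ k - 1 := by
  intro iB iT jB jT hT hB hio hjo
  have hio' : iT.val < iB.val := hio
  have hjo' : jB.val < jT.val := hjo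
  simp only [WP] at hT hB
  split_ifs at hT with h1 h2 <;> split_ifs at hB with g1 g2
  · -- both in left block
    by_contra hc
    push_neg at hc
    have hiT0 : iT.val = 0 := by omega
    have hiBk : iB.val = k - 1 := by omega
    have hT' : P ⟨0, by omega⟩ ⟨jT.val, by omega⟩ = true := by
      have : (⟨iT.val, h1.2⟩ : Fin k) = ⟨0, by omega⟩ := Fin.ext hiT0
      rwa [this] at hT
    have hB' : P ⟨k - 1, by omega⟩ ⟨jB.val, by omega⟩ = true := by
      have : (⟨iB.val, g1.2⟩ : Fin k) = ⟨k - 1, by omega⟩ := Fin.ext hiBk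
      rwa [this] at hB
    have ha' := (hrow0 ⟨jT.val, by omega⟩).mp hT'
    have hb' := (hrowlast ⟨jB.val, by omega⟩).mp hB'
    simp only at ha' hb'
    omega
  · -- iT left, iB right: jB ≥ k-1 > jT > jB, contradiction
    omega
  · -- iT right, iB left: height small since iT ≥ t - s ≥ 1
    omega
  · -- both in right block
    by_contra hc
    push_neg at hc
    have hiT0 : iT.val - (t - s) = 0 := by omega
    have hiBk : iB.val - (t - s) = k - 1 := by omega
    have hT' : P ⟨0, by omega⟩ ⟨jT.val - (k - 2), by omega⟩ = true := by
      have : (⟨iT.val - (t - s), h2.2.2.1⟩ : Fin k) = ⟨0, by omega⟩ := Fin.ext hiT0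
      rwa [this] at hT
    have hB' : P ⟨k - 1, by omega⟩ ⟨jB.val - (k - 2), by omega⟩ = true := by
      have : (⟨iB.val - (t - s), g2.2.2.1⟩ : Fin k) = ⟨k - 1, by omega⟩ := Fin.ext hiBk
      rwa [this] at hB
    have ha' := (hrow0 ⟨jT.val - (k - 2), by omega⟩).mp hT'
    have hb' := (hrowlast ⟨jB.val - (k - 2), by omega⟩).mp hB'
    simp only at ha' hb'
    omega
end

section
/- The 6×6 permutation matrix Q9 with 1-entries at (1,2),(2,4),(3,1),(4,6),(5,3),(6,5) is contained in W(Q9), the matrix obtained from the standard two-copy construction; i.e., for this pattern the construction W(P) fails to avoid P. -/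
def Q9 : Fin 6 → Fin 6 → Bool := fun i j =>
  decide ((i.val, j.val) ∈ [(0, 1), (1, 3), (2, 0), (3, 5), (4, 2), (5, 4)])

theorem stmt17 : Contains (WP Q9 2 3) Q9 := by
  refine ⟨![0,1,2,4,5,6], ![0,1,4,5,8,9], ?_, ?_, ?_⟩
  · intro a b h; fin_cases a <;> fin_cases b <;> simp_all <;> decide
  · intro a b h; fin_cases a <;> fin_cases b <;> simp_all <;> decide
  · decide
end
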